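/- arXiv:1505.00866 — 2 statements merged into one kernel-verified Lean document; each statement's English description precedes it below -/
import Mathlib

section
/- For all real numbers a and b, |a - b|^3 ≤ 2(a - b)·a·|a| + 2b²·|a - b|. -/
/-!
Both sides are invariant under `(a, b) ↦ (-a, -b)`, so we may assume `b ≤ a`; dividing by
`a - b ≥ 0` leaves `(a - b)² ≤ 2a|a| + 2b²`. For `a ≥ 0` the difference of the two sides is
`(a + b)²`, and for `b ≤ a < 0` it is `(a - b)(-(3a + b))`.
-/

theorem sub_sq_le_two_mul_mul_abs_add_two_mul_sq {a b : ℝ} (h : b ≤ a) :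
    (a - b) ^ 2 ≤ 2 * a * |a| + 2 * b ^ 2 := by
  rcases le_or_gt 0 a with ha | ha
  · rw [abs_of_nonneg ha]
    nlinarith [sq_nonneg (a + b)]
  · rw [abs_of_neg ha]
    nlinarith [mul_nonneg (sub_nonneg.2 h) (by linarith : 0 ≤ -(3 * a + b))]

/-- Scalar inequality (E:sc1): for all real `a`, `b`,
`|a - b|^3 ≤ 2(a - b)·a·|a| + 2 b² |a - b|`. -/
theorem scalar_cube_inequality (a b : ℝ) :
    |a - b| ^ 3 ≤ 2 * (a - b) * a * |a| + 2 * b ^ 2 * |a - b| := by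
  wlog h : b ≤ a generalizing a b
  · have := this (-a) (-b) (by linarith)
    rw [neg_sub_neg, abs_neg, abs_sub_comm, neg_sq] at this
    linarith
  rw [abs_of_nonneg (sub_nonneg.2 h)]
  nlinarith [mul_le_mul_of_nonneg_left (sub_sq_le_two_mul_mul_abs_add_two_mul_sq h) (sub_nonneg.2 h)]
end

section
/- Let θ > 0, f, v ∈ L²(Ω), and g ∈ C(Ω̄) with g > 0. Suppose p : Ω → ℝ² satisfies the fixed-point (optimality) condition g(w)∇(θ div p − (f − v)) = |∇(θ div p − (f − v))| p pointwise. Then |p(x)| ≤ g(w(x)) at every point where ∇(θ div p − (f − v)) ≠ 0; in particular, the iterates p^{n+1} = (p^n + δt ∇(div p^n − (f−v)/θ)) / (1 + (δt/g(w)) |∇(div p^n − (f−v)/θ)|) satisfy |p^{n+1}(x)| ≤ max(|p^n(x)|, g(w(x))) pointwise, so if |p^0| ≤ g(w) then |p^n| ≤ g(w) for all n. -/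
/-!
Taking norms in the fixed-point relation `g • G = ‖G‖ • q` gives `g ‖G‖ = ‖G‖ ‖q‖`, so
`‖q‖ = g` wherever `G ≠ 0`. For the semi-implicit step, with `M = max ‖p‖ g` the triangle
inequality gives `‖p + δt • G‖ ≤ ‖p‖ + g (δt / g) ‖G‖ ≤ M (1 + (δt / g) ‖G‖)`, and the
denominator of the step is exactly this last factor.
-/

local notation "E2" => EuclideanSpace ℝ (Fin 2)

/-- Divergence of a vector field on ℝ². -/
noncomputable def vdiv (ψ : E2 → E2) (x : E2) : ℝ :=
  ∑ i, fderiv ℝ ψ x (EuclideanSpace.single i 1) i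

section Chambolle

variable {E : Type*} [NormedAddCommGroup E] [NormedSpace ℝ E]

theorem norm_eq_abs_of_smul_eq_norm_smul {c : ℝ} {a b : E} (hb : b ≠ 0)
    (h : c • b = ‖b‖ • a) : ‖a‖ = |c| := by
  have hnorm : |c| * ‖b‖ = ‖b‖ * ‖a‖ := by
    simpa only [norm_smul, Real.norm_eq_abs, abs_norm] using congrArg norm h
  exact mul_left_cancel₀ (norm_ne_zero_iff.mpr hb) (hnorm.symm.trans (mul_comm _ _))

noncomputable def semiImplicitStep (τ g : ℝ) (p G : E) : E :=
  (1 + (τ / g) * ‖G‖)⁻¹ • (p + τ • G)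

theorem norm_semiImplicitStep_le {τ g : ℝ} (hτ : 0 ≤ τ) (hg : 0 < g) (p G : E) :
    ‖semiImplicitStep τ g p G‖ ≤ max ‖p‖ g := by
  set M := max ‖p‖ g
  set k := (τ / g) * ‖G‖
  have hk : 0 ≤ k := by positivity
  have hnum : ‖p + τ • G‖ ≤ M * (1 + k) :=
    calc ‖p + τ • G‖ ≤ ‖p‖ + τ * ‖G‖ := by
          simpa only [norm_smul, Real.norm_eq_abs, abs_of_nonneg hτ] using norm_add_le p (τ • G)
      _ = ‖p‖ + g * k := by simp only [k]; field_simp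
      _ ≤ M + M * k := by gcongr <;> simp [M]
      _ = M * (1 + k) := by ring
  have hden : 0 < 1 + k := by positivity
  rwa [semiImplicitStep, norm_smul, Real.norm_eq_abs, abs_of_pos (inv_pos.mpr hden),
    inv_mul_le_iff₀ hden, mul_comm]

end Chambolle

theorem dual_constraint_maintained_general (δt : ℝ)
    (hδt : 0 < δt)
    (gw : E2 → ℝ) (hgw : ∀ x, 0 < gw x)
    (q : E2 → E2) (G : E2 → E2)
    (hfix : ∀ x, gw x • G x = ‖G x‖ • q x)
    (ps : ℕ → E2 → E2) (Gs : ℕ → E2 → E2)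
    (hit : ∀ n x, ps (n + 1) x =
      (1 + (δt / gw x) * ‖Gs n x‖)⁻¹ • (ps n x + δt • Gs n x)) :
    (∀ x, G x ≠ 0 → ‖q x‖ ≤ gw x) ∧
    (∀ n x, ‖ps (n + 1) x‖ ≤ max ‖ps n x‖ (gw x)) ∧
    ((∀ x, ‖ps 0 x‖ ≤ gw x) → ∀ n x, ‖ps n x‖ ≤ gw x) := by
  have step : ∀ n x, ‖ps (n + 1) x‖ ≤ max ‖ps n x‖ (gw x) := fun n x => by
    rw [hit n x]
    exact norm_semiImplicitStep_le hδt.le (hgw x) (ps n x) (Gs n x)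
  refine ⟨fun x hx => ?_, step, fun h0 n => ?_⟩
  · rw [norm_eq_abs_of_smul_eq_norm_smul hx (hfix x), abs_of_pos (hgw x)]
  · induction n with
    | zero => exact h0
    | succ n ih => exact fun x => (step n x).trans (max_le (ih x) le_rfl)

/-- Constraint maintenance in Chambolle's dual projection for weighted TV:
if the dual variable `q` satisfies the fixed-point condition
`g(w) ∇(θ div q - (f - v)) = |∇(θ div q - (f - v))| q`, then `|q| ≤ g(w)`
wherever the gradient is nonzero; moreover the semi-implicit iterates
`p^{n+1} = (p^n + δt Gⁿ)/(1 + (δt/g(w))|Gⁿ|)` satisfy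
`|p^{n+1}| ≤ max(|p^n|, g(w))` pointwise, so `|p⁰| ≤ g(w)` implies
`|p^n| ≤ g(w)` for all `n`. -/
theorem dual_constraint_maintained (Ω : Set E2) (θ δt : ℝ)
    (hθ : 0 < θ) (hδt : 0 < δt)
    (f v gw : E2 → ℝ) (hgw : ∀ x, 0 < gw x)
    (q : E2 → E2) (G : E2 → E2)
    (hG : G = gradient fun y => θ * vdiv q y - (f y - v y))
    (hfix : ∀ x, gw x • G x = ‖G x‖ • q x)
    (ps : ℕ → E2 → E2) (Gs : ℕ → E2 → E2)
    (hit : ∀ n x, ps (n + 1) x =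
      (1 + (δt / gw x) * ‖Gs n x‖)⁻¹ • (ps n x + δt • Gs n x)) :
    (∀ x, G x ≠ 0 → ‖q x‖ ≤ gw x) ∧
    (∀ n x, ‖ps (n + 1) x‖ ≤ max ‖ps n x‖ (gw x)) ∧
    ((∀ x, ‖ps 0 x‖ ≤ gw x) → ∀ n x, ‖ps n x‖ ≤ gw x) :=
  dual_constraint_maintained_general δt hδt gw hgw q G hfix ps Gs hit
end
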